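/- arXiv:2601.22031 — 2 statements merged into one kernel-verified Lean document; each statement's English description precedes it below -/
import Mathlib

section
/- Let (Ω, μ) be a probability space, E a real inner product space, S : Ω → ℝ a measurable function with S(ω) ≥ 0 for all ω, and G : Ω → E strongly measurable with ‖G(ω)‖² ≤ α·S(ω) + ε for almost every ω, where α, ε ≥ 0 and β > 0. Define X(ω) = (β + S(ω))⁻¹ • G(ω) and let m = ∫ X dμ (assuming X is Bochner integrable). Then the variance ∫ ‖X(ω) − m‖² dμ(ω) ≤ ε/β² + α/(4β). -/
/-!
The weight `(β + S)⁻¹` tames the gradient bound: by AM–GM, `(β + s)² ≥ 4βs` and `(β + s)² ≥ β²`,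
so `‖X‖² ≤ (α s + ε) / (β + s)² ≤ ε / β² + α / (4β)` pointwise. The variance of a
square-integrable random vector is its second moment minus `‖𝔼 X‖²`, hence at most that
second moment, and the pointwise bound integrates over a probability space.
-/

open MeasureTheory

theorem mul_add_div_add_sq_le {α ε β s : ℝ} (hα : 0 ≤ α) (hε : 0 ≤ ε) (hβ : 0 < β)
    (hs : 0 ≤ s) :
    (α * s + ε) / (β + s) ^ 2 ≤ ε / β ^ 2 + α / (4 * β) := by
  have hε_le : ε ≤ ε / β ^ 2 * (β + s) ^ 2 := by
    rw [div_mul_eq_mul_div, le_div_iff₀ (by positivity)]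
    exact mul_le_mul_of_nonneg_left (by nlinarith) hε
  have hαs_le : α * s ≤ α / (4 * β) * (β + s) ^ 2 := by
    rw [div_mul_eq_mul_div, le_div_iff₀ (by positivity)]
    nlinarith [mul_nonneg hα (sq_nonneg (β - s))]
  rw [div_le_iff₀ (by positivity)]
  linarith

theorem norm_inv_add_smul_sq_le {E : Type*} [NormedAddCommGroup E] [NormedSpace ℝ E]
    {α ε β s : ℝ} {g : E} (hα : 0 ≤ α) (hε : 0 ≤ ε) (hβ : 0 < β) (hs : 0 ≤ s)
    (hg : ‖g‖ ^ 2 ≤ α * s + ε) :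
    ‖(β + s)⁻¹ • g‖ ^ 2 ≤ ε / β ^ 2 + α / (4 * β) := calc
  ‖(β + s)⁻¹ • g‖ ^ 2 = ‖g‖ ^ 2 / (β + s) ^ 2 := by
    rw [norm_smul, Real.norm_of_nonneg (by positivity)]
    field_simp
  _ ≤ (α * s + ε) / (β + s) ^ 2 := by gcongr
  _ ≤ ε / β ^ 2 + α / (4 * β) := mul_add_div_add_sq_le hα hε hβ hs

section Variance

variable {Ω E : Type*} [MeasurableSpace Ω] {μ : Measure Ω} [IsProbabilityMeasure μ]
  [NormedAddCommGroup E] [InnerProductSpace ℝ E] [CompleteSpace E] {X : Ω → E}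

theorem integral_norm_sub_integral_sq (hX : Integrable X μ)
    (hX2 : Integrable (fun ω => ‖X ω‖ ^ 2) μ) :
    ∫ ω, ‖X ω - ∫ ω', X ω' ∂μ‖ ^ 2 ∂μ = ∫ ω, ‖X ω‖ ^ 2 ∂μ - ‖∫ ω, X ω ∂μ‖ ^ 2 := by
  set m := ∫ ω, X ω ∂μ
  have h_inner : ∫ ω, inner ℝ (X ω) m ∂μ = ‖m‖ ^ 2 := by
    simp_rw [real_inner_comm m]
    rw [integral_inner hX, real_inner_self_eq_norm_sq]
  have h_cross : Integrable (fun ω => 2 * inner ℝ (X ω) m) μ := (hX.inner_const m).const_mul 2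
  simp_rw [norm_sub_sq_real]
  rw [integral_add (f := fun ω => ‖X ω‖ ^ 2 - 2 * inner ℝ (X ω) m) (hX2.sub h_cross)
    (integrable_const _), integral_sub hX2 h_cross,
    integral_const_mul, h_inner, integral_const, probReal_univ, one_smul]
  ring

theorem integral_norm_sub_integral_sq_le (hX : Integrable X μ)
    (hX2 : Integrable (fun ω => ‖X ω‖ ^ 2) μ) :
    ∫ ω, ‖X ω - ∫ ω', X ω' ∂μ‖ ^ 2 ∂μ ≤ ∫ ω, ‖X ω‖ ^ 2 ∂μ := by
  rw [integral_norm_sub_integral_sq hX hX2]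
  linarith [sq_nonneg ‖∫ ω, X ω ∂μ‖]

theorem integral_norm_sub_integral_sq_le_of_ae_le (hX : Integrable X μ) {C : ℝ}
    (hC : ∀ᵐ ω ∂μ, ‖X ω‖ ^ 2 ≤ C) :
    ∫ ω, ‖X ω - ∫ ω', X ω' ∂μ‖ ^ 2 ∂μ ≤ C := by
  have hX2 : Integrable (fun ω => ‖X ω‖ ^ 2) μ := by
    refine (integrable_const C).mono' (hX.aestronglyMeasurable.norm.pow 2) ?_
    filter_upwards [hC] with ω hω
    rwa [Real.norm_of_nonneg (sq_nonneg _)]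
  calc ∫ ω, ‖X ω - ∫ ω', X ω' ∂μ‖ ^ 2 ∂μ ≤ ∫ ω, ‖X ω‖ ^ 2 ∂μ :=
        integral_norm_sub_integral_sq_le hX hX2
    _ ≤ ∫ _, C ∂μ := integral_mono_ae hX2 (integrable_const C) hC
    _ = C := by simp

end Variance

theorem card_gradient_variance_bound_general
    {Ω : Type*} [MeasurableSpace Ω] (μ : Measure Ω) [IsProbabilityMeasure μ]
    {E : Type*} [NormedAddCommGroup E] [InnerProductSpace ℝ E] [CompleteSpace E]
    (S : Ω → ℝ) (hS : ∀ ω, 0 ≤ S ω)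
    (G : Ω → E)
    (α ε β : ℝ) (hα : 0 ≤ α) (hε : 0 ≤ ε) (hβ : 0 < β)
    (hG : ∀ᵐ ω ∂μ, ‖G ω‖ ^ 2 ≤ α * S ω + ε)
    (X : Ω → E) (hX : X = fun ω => (β + S ω)⁻¹ • G ω)
    (hXint : Integrable X μ)
    (m : E) (hm : m = ∫ ω, X ω ∂μ) :
    ∫ ω, ‖X ω - m‖ ^ 2 ∂μ ≤ ε / β ^ 2 + α / (4 * β) := by
  subst hm
  refine integral_norm_sub_integral_sq_le_of_ae_le hXint ?_
  filter_upwards [hG] with ω hω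
  rw [hX]
  exact norm_inv_add_smul_sq_le hα hε hβ (hS ω) hω

/-- Proposition 1 (Gradient Variance Stabilization). On a probability space,
let `G` be the stochastic gradient with `‖G ω‖² ≤ α·S ω + ε` a.e., where `S ≥ 0`
is the measurable local ambiguity score, `α, ε ≥ 0`, `β > 0`. With the CARD
weighting `X ω = (β + S ω)⁻¹ • G ω` and mean `m = ∫ X dμ`, the variance
`∫ ‖X ω − m‖² dμ` is at most `ε/β² + α/(4β)`. -/
theorem card_gradient_variance_bound
    {Ω : Type*} [MeasurableSpace Ω] (μ : Measure Ω) [IsProbabilityMeasure μ]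
    {E : Type*} [NormedAddCommGroup E] [InnerProductSpace ℝ E] [CompleteSpace E]
    (S : Ω → ℝ) (hSmeas : Measurable S) (hS : ∀ ω, 0 ≤ S ω)
    (G : Ω → E) (hGmeas : StronglyMeasurable G)
    (α ε β : ℝ) (hα : 0 ≤ α) (hε : 0 ≤ ε) (hβ : 0 < β)
    (hG : ∀ᵐ ω ∂μ, ‖G ω‖ ^ 2 ≤ α * S ω + ε)
    (X : Ω → E) (hX : X = fun ω => (β + S ω)⁻¹ • G ω)
    (hXint : Integrable X μ)
    (m : E) (hm : m = ∫ ω, X ω ∂μ) :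
    ∫ ω, ‖X ω - m‖ ^ 2 ∂μ ≤ ε / β ^ 2 + α / (4 * β) :=
  card_gradient_variance_bound_general μ S hS G α ε β hα hε hβ hG X hX hXint m hm
end

section
/- Let L ≥ 1 and 0 ≤ m ≤ L be natural numbers and f : ℕ → ℝ with f(d) ≥ 0 for all d. Then ∑_{n=1}^{L} ∑_{i=1}^{min(n−1, L−m)} f(n−i) ≥ (1 − m/L)·∑_{n=1}^{L} ∑_{i=1}^{n−1} f(n−i). Moreover, if 1 ≤ m < L and f(d) > 0 for some d with 1 ≤ d ≤ L−1, then the inequality is strict. -/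
/-!
Both double sums collect `f d` once for every pair of positions at distance `d`. Without masking
there are `L - d` such pairs; tail masking keeps `min (L - d) (L - m)` of them. Writing
`a = L - m` and `b = L - d`, uniform masking keeps `a b / L` of them on average, and
`a b = min a b * max a b ≤ min a b * L`, strictly so when `0 < a, b < L`.
-/

open Finset

theorem mul_le_min_mul {α : Type*} [CommSemiring α] [LinearOrder α] [IsOrderedRing α]
    {a b c : α} (ha : 0 ≤ a) (hb : 0 ≤ b) (hac : a ≤ c) (hbc : b ≤ c) :
    a * b ≤ min a b * c := by
  rw [← min_mul_max a b]
  exact mul_le_mul_of_nonneg_left (max_le hac hbc) (le_min ha hb)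

theorem mul_lt_min_mul {α : Type*} [CommSemiring α] [LinearOrder α] [IsStrictOrderedRing α]
    {a b c : α} (ha : 0 < a) (hb : 0 < b) (hac : a < c) (hbc : b < c) :
    a * b < min a b * c := by
  rw [← min_mul_max a b]
  exact mul_lt_mul_of_pos_left (max_lt hac hbc) (lt_min ha hb)

theorem sum_Icc_sum_Icc_min_sub_eq_sum_nsmul {M : Type*} [AddCommMonoid M]
    (L c : ℕ) (f : ℕ → M) :
    ∑ n ∈ Icc 1 L, ∑ i ∈ Icc 1 (min (n - 1) c), f (n - i)
      = ∑ d ∈ Icc 1 (L - 1), min (L - d) c • f d := by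
  have reindex : ∀ n ∈ Icc 1 L, ∑ i ∈ Icc 1 (min (n - 1) c), f (n - i)
      = ∑ d ∈ Icc (n - min (n - 1) c) (n - 1), f d := fun n hn => by
    refine sum_nbij' (n - ·) (n - ·) ?_ ?_ ?_ ?_ fun _ _ => rfl <;>
      intro x hx <;> simp only [mem_Icc] at * <;> omega
  rw [sum_congr rfl reindex,
    sum_comm' (s' := fun d => Icc (d + 1) (min L (d + c))) (t' := Icc 1 (L - 1))
      (fun n d => by simp only [mem_Icc]; omega)]
  refine sum_congr rfl fun d _ => ?_
  rw [sum_const, Nat.card_Icc]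
  congr 1
  omega

theorem sum_Icc_sum_Icc_sub_eq_sum_nsmul {M : Type*} [AddCommMonoid M] (L : ℕ) (f : ℕ → M) :
    ∑ n ∈ Icc 1 L, ∑ i ∈ Icc 1 (n - 1), f (n - i)
      = ∑ d ∈ Icc 1 (L - 1), (L - d) • f d := by
  have h := sum_Icc_sum_Icc_min_sub_eq_sum_nsmul L L f
  simp only [min_eq_left (Nat.sub_le L _)] at h
  rw [← h]
  refine sum_congr rfl fun n hn => ?_
  rw [min_eq_left (by simp only [mem_Icc] at hn; omega)]

theorem one_sub_div_le_cast_sub_div {L : ℕ} (m : ℕ) (hL : (0 : ℝ) < L) :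
    1 - (m : ℝ) / L ≤ ((L - m : ℕ) : ℝ) / L := by
  rw [le_div_iff₀ hL, sub_mul, one_mul, div_mul_cancel₀ _ hL.ne', sub_le_iff_le_add]
  exact_mod_cast le_tsub_add

theorem one_sub_div_mul_cast_sub_le_cast_min {L d : ℕ} (m : ℕ) (hd : d < L) :
    (1 - (m : ℝ) / L) * ((L - d : ℕ) : ℝ) ≤ ((min (L - d) (L - m) : ℕ) : ℝ) := by
  have hL : (0 : ℝ) < L := Nat.cast_pos.mpr (Nat.zero_lt_of_lt hd)
  calc (1 - (m : ℝ) / L) * ((L - d : ℕ) : ℝ)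
      ≤ ((L - m : ℕ) : ℝ) / L * ((L - d : ℕ) : ℝ) := by
        gcongr
        exact one_sub_div_le_cast_sub_div m hL
    _ ≤ ((min (L - d) (L - m) : ℕ) : ℝ) := by
        rw [div_mul_eq_mul_div, div_le_iff₀ hL, Nat.cast_min, min_comm]
        exact mul_le_min_mul (by positivity) (by positivity)
          (by exact_mod_cast Nat.sub_le L m) (by exact_mod_cast Nat.sub_le L d)

theorem one_sub_div_mul_cast_sub_lt_cast_min {L m d : ℕ} (hm : 0 < m) (hmL : m < L) (hd : 0 < d)
    (hdL : d < L) :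
    (1 - (m : ℝ) / L) * ((L - d : ℕ) : ℝ) < ((min (L - d) (L - m) : ℕ) : ℝ) := by
  have hL : (0 : ℝ) < L := Nat.cast_pos.mpr (Nat.zero_lt_of_lt hdL)
  rw [one_sub_div hL.ne', ← Nat.cast_sub hmL.le, div_mul_eq_mul_div, div_lt_iff₀ hL,
    Nat.cast_min, min_comm]
  exact mul_lt_min_mul (by simpa using hmL) (by simpa using hdL)
    (by exact_mod_cast Nat.sub_lt (hm.trans hmL) hm)
    (by exact_mod_cast Nat.sub_lt (hd.trans hdL) hd)

theorem tail_masking_signal_retention_general (L m : ℕ)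
    (f : ℕ → ℝ) (hf : ∀ d, 0 ≤ f d) :
    (∑ n ∈ Icc 1 L, ∑ i ∈ Icc 1 (min (n - 1) (L - m)), f (n - i)
        ≥ (1 - (m : ℝ) / L) * ∑ n ∈ Icc 1 L, ∑ i ∈ Icc 1 (n - 1), f (n - i)) ∧
      (1 ≤ m → m < L → (∃ d ∈ Icc 1 (L - 1), 0 < f d) →
        ∑ n ∈ Icc 1 L, ∑ i ∈ Icc 1 (min (n - 1) (L - m)), f (n - i)
          > (1 - (m : ℝ) / L) * ∑ n ∈ Icc 1 L, ∑ i ∈ Icc 1 (n - 1), f (n - i)) := by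
  simp only [sum_Icc_sum_Icc_min_sub_eq_sum_nsmul, sum_Icc_sum_Icc_sub_eq_sum_nsmul,
    nsmul_eq_mul, mul_sum, ← mul_assoc, ge_iff_le, gt_iff_lt]
  have hle : ∀ d ∈ Icc 1 (L - 1), (1 - (m : ℝ) / L) * ((L - d : ℕ) : ℝ) * f d
      ≤ ((min (L - d) (L - m) : ℕ) : ℝ) * f d := fun d hd => by
    simp only [mem_Icc] at hd
    exact mul_le_mul_of_nonneg_right (one_sub_div_mul_cast_sub_le_cast_min m (by omega)) (hf d)
  refine ⟨sum_le_sum hle, fun hm1 hmL ⟨d, hd, hfd⟩ => sum_lt_sum hle ⟨d, hd, ?_⟩⟩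
  simp only [mem_Icc] at hd
  exact mul_lt_mul_of_pos_right (one_sub_div_mul_cast_sub_lt_cast_min hm1 hmL hd.1 (by omega)) hfd

/-- Proposition 2 (Signal Retention via Causal MI Maximization).
For `L ≥ 1`, `m ≤ L` and nonnegative distance-MI profile `f`, tail masking of
the last `m` positions retains at least as much cumulative causal mutual
information as uniform masking at the same expected noise budget `m/L`:
`∑_{n=1}^{L} ∑_{i=1}^{min(n−1, L−m)} f(n−i) ≥ (1 − m/L)·∑_{n=1}^{L} ∑_{i=1}^{n−1} f(n−i)`,
with strict inequality whenever `1 ≤ m < L` and `f(d) > 0` for some `1 ≤ d ≤ L−1`. -/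
theorem tail_masking_signal_retention (L m : ℕ) (hL : 1 ≤ L) (hm : m ≤ L)
    (f : ℕ → ℝ) (hf : ∀ d, 0 ≤ f d) :
    (∑ n ∈ Icc 1 L, ∑ i ∈ Icc 1 (min (n - 1) (L - m)), f (n - i)
        ≥ (1 - (m : ℝ) / L) * ∑ n ∈ Icc 1 L, ∑ i ∈ Icc 1 (n - 1), f (n - i)) ∧
      (1 ≤ m → m < L → (∃ d ∈ Icc 1 (L - 1), 0 < f d) →
        ∑ n ∈ Icc 1 L, ∑ i ∈ Icc 1 (min (n - 1) (L - m)), f (n - i)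
          > (1 - (m : ℝ) / L) * ∑ n ∈ Icc 1 L, ∑ i ∈ Icc 1 (n - 1), f (n - i)) :=
  tail_masking_signal_retention_general L m f hf
end
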